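/- Let M_T̂ be the stochastic matrix constructed from substochastic P_T (spectral radius < 1) and nonnegative P_{T,R}, P_{T,D} with P_{T,R} e + P_T e + P_{T,D} e = e, as in the random-surfer model (blocks R' → T and D' → T via e μ_T, and T → (R', T, D') via (P_{T,R}, P_T, P_{T,D})). If φ is ANY stationary probability vector of M_T̂ with blocks (φ_{R'}, φ_T, φ_{D'}), then φ_{R'} = φ_T P_{T,R}, φ_{D'} = φ_T P_{T,D}, and φ_T is a stationary vector of Q_T := P_T + (e - P_T e) μ_T scaled so that φ_T e = 1/(1+θ_T). -/

import Mathlib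

/-!
Reading `φ ᵥ* M_T̂ = φ` block by block gives `φ_{R'} = φ_T P_{T,R}`, `φ_{D'} = φ_T P_{T,D}`
and `φ_T = φ_T P_T + (1 - s) μ_T` with `s = φ_T e`, because the mass outside `T` is `1 - s`.
Pairing the last equation with `e` gives `φ_T (e - P_T e) = 1 - s`, which is exactly the
stationarity of `φ_T` for `Q_T`. As `ρ(P_T) < 1`, `I - P_T` is invertible and
`φ_T = (1 - s)/n · eᵀ(I - P_T)⁻¹`; with `c = eᵀ(I - P_T)⁻¹ e` this says `s n = (1 - s) c`,
while `eᵀ(I - P_T)⁻¹ P_T = eᵀ(I - P_T)⁻¹ - eᵀ` gives `θ_T = n / c`, so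
`s = c / (c + n) = 1 / (1 + θ_T)`. Nonnegativity of `φ` excludes `s = 0`, which would force
`φ = 0`.
-/

open Matrix

/-- The extended transient-class transition matrix `M_T̂` of the random-surfer model:
rows in `R'` and `D'` jump to `T` uniformly, rows in `T` move via `[P_TR | P_T | P_TD]`. -/
noncomputable def Mhat {r n d : ℕ} (P_TR : Matrix (Fin n) (Fin r) ℝ)
    (P_T : Matrix (Fin n) (Fin n) ℝ) (P_TD : Matrix (Fin n) (Fin d) ℝ) :
    Matrix (Fin r ⊕ Fin n ⊕ Fin d) (Fin r ⊕ Fin n ⊕ Fin d) ℝ :=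
  Matrix.of fun p q =>
    match p, q with
    | Sum.inl _, Sum.inr (Sum.inl _) => (n : ℝ)⁻¹
    | Sum.inl _, _ => 0
    | Sum.inr (Sum.inl i), Sum.inl j => P_TR i j
    | Sum.inr (Sum.inl i), Sum.inr (Sum.inl j) => P_T i j
    | Sum.inr (Sum.inl i), Sum.inr (Sum.inr j) => P_TD i j
    | Sum.inr (Sum.inr _), Sum.inr (Sum.inl _) => (n : ℝ)⁻¹
    | Sum.inr (Sum.inr _), _ => 0

theorem isUnit_one_sub_of_spectralRadius_lt_one {𝕜 A : Type*} [NormedField 𝕜] [Ring A]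
    [Algebra 𝕜 A] {a : A} (h : spectralRadius 𝕜 a < 1) : IsUnit (1 - a) := by
  have h1 := spectrum.mem_resolventSet_of_spectralRadius_lt (k := (1 : 𝕜)) (by simpa using h)
  rwa [spectrum.mem_resolventSet_iff, map_one] at h1

section RestartChain

variable {τ : Type*} [Fintype τ]

theorem vecMul_add_vecMulVec_eq_self {R : Type*} [CommRing R] {P : Matrix τ τ R}
    {e μ x : τ → R} (hμ : μ ⬝ᵥ e = 1) (hx : x ᵥ* P + (1 - x ⬝ᵥ e) • μ = x) :
    x ᵥ* (P + vecMulVec (e - P *ᵥ e) μ) = x := by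
  have hmass : x ⬝ᵥ (e - P *ᵥ e) = 1 - x ⬝ᵥ e := by
    have h := congrArg (· ⬝ᵥ e) hx
    simp only [add_dotProduct, smul_dotProduct, hμ, smul_eq_mul, mul_one] at h
    rw [dotProduct_sub, dotProduct_mulVec]
    linear_combination -h
  rw [vecMul_add, vecMul_vecMulVec, hmass, hx]

variable {K : Type*} [Field K] [DecidableEq τ]

-- `λ_T` and `θ_T` of the paper; note that `(1 - P)⁻¹` is `0` when `1 - P` is singular.
noncomputable def lambdaT (P : Matrix τ τ K) (e : τ → K) : τ → K :=
  ((e ᵥ* (1 - P)⁻¹) ⬝ᵥ e)⁻¹ • (e ᵥ* (1 - P)⁻¹)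

noncomputable def thetaT (P : Matrix τ τ K) (e : τ → K) : K :=
  1 - (lambdaT P e ᵥ* P) ⬝ᵥ e

theorem eq_vecMul_inv_of_vecMul_one_sub_eq {P : Matrix τ τ K} (hP : IsUnit (1 - P).det)
    {x y : τ → K} (hx : x ᵥ* (1 - P) = y) : x = y ᵥ* (1 - P)⁻¹ := by
  rw [← hx, vecMul_vecMul, mul_nonsing_inv _ hP, vecMul_one]

theorem thetaT_eq {P : Matrix τ τ K} {e : τ → K} (hP : IsUnit (1 - P).det)
    (hc : (e ᵥ* (1 - P)⁻¹) ⬝ᵥ e ≠ 0) :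
    thetaT P e = (e ⬝ᵥ e) / ((e ᵥ* (1 - P)⁻¹) ⬝ᵥ e) := by
  rw [thetaT, lambdaT]
  set w := e ᵥ* (1 - P)⁻¹
  have hwP : w ᵥ* P = w - e := by
    have h : w ᵥ* (1 - P) = e := by
      rw [vecMul_vecMul, nonsing_inv_mul _ hP, vecMul_one]
    rw [vecMul_sub, vecMul_one] at h
    rw [← h, sub_sub_cancel]
  rw [smul_vecMul, hwP, smul_dotProduct, sub_dotProduct, smul_eq_mul]
  field_simp
  ring

theorem dotProduct_eq_one_div_one_add_thetaT {P : Matrix τ τ K} {e x : τ → K}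
    (hP : IsUnit (1 - P).det) (he : e ⬝ᵥ e ≠ 0)
    (hx : x ᵥ* P + (1 - x ⬝ᵥ e) • (e ⬝ᵥ e)⁻¹ • e = x) (hs : x ⬝ᵥ e ≠ 0) :
    x ⬝ᵥ e = 1 / (1 + thetaT P e) := by
  set s := x ⬝ᵥ e
  set m := e ⬝ᵥ e
  set c := (e ᵥ* (1 - P)⁻¹) ⬝ᵥ e
  have hxw : x = ((1 - s) * m⁻¹) • (e ᵥ* (1 - P)⁻¹) := by
    rw [← smul_vecMul, mul_smul]
    apply eq_vecMul_inv_of_vecMul_one_sub_eq hP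
    rw [vecMul_sub, vecMul_one]
    exact (eq_sub_of_add_eq' hx).symm
  have hsc : s * m = (1 - s) * c := by
    have h := congrArg (· ⬝ᵥ e) hxw
    simp only [smul_dotProduct, smul_eq_mul] at h
    field_simp at h
    exact h
  have hc : c ≠ 0 := by
    intro h0
    rw [h0, mul_zero] at hsc
    exact hs ((mul_eq_zero.mp hsc).resolve_right he)
  have hcm : s * (c + m) = c := by linear_combination hsc
  have hcm' : c + m ≠ 0 := fun h => hc (by rw [← hcm, h, mul_zero])
  have hθ : thetaT P e = m / c := thetaT_eq hP hc
  rw [hθ, one_add_div hc, one_div_div, eq_div_iff hcm']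
  linear_combination hcm

end RestartChain

section Mhat

variable {r n d : ℕ} (P_TR : Matrix (Fin n) (Fin r) ℝ) (P_T : Matrix (Fin n) (Fin n) ℝ)
  (P_TD : Matrix (Fin n) (Fin d) ℝ) (v : Fin r ⊕ Fin n ⊕ Fin d → ℝ)

theorem vecMul_Mhat_inl (j : Fin r) :
    (v ᵥ* Mhat P_TR P_T P_TD) (Sum.inl j) = ((fun i => v (Sum.inr (Sum.inl i))) ᵥ* P_TR) j := by
  simp [vecMul, dotProduct, Mhat, Fintype.sum_sum_type]

theorem vecMul_Mhat_inr_inr (j : Fin d) :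
    (v ᵥ* Mhat P_TR P_T P_TD) (Sum.inr (Sum.inr j)) =
      ((fun i => v (Sum.inr (Sum.inl i))) ᵥ* P_TD) j := by
  simp [vecMul, dotProduct, Mhat, Fintype.sum_sum_type]

theorem vecMul_Mhat_inr_inl (j : Fin n) :
    (v ᵥ* Mhat P_TR P_T P_TD) (Sum.inr (Sum.inl j)) =
      ((fun i => v (Sum.inr (Sum.inl i))) ᵥ* P_T) j +
        (∑ i, v (Sum.inl i) + ∑ k, v (Sum.inr (Sum.inr k))) * (n : ℝ)⁻¹ := by
  rw [add_mul, Finset.sum_mul, Finset.sum_mul]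
  simp [vecMul, dotProduct, Mhat, Fintype.sum_sum_type]
  ring

variable {P_TR P_T P_TD} {φ : Fin r ⊕ Fin n ⊕ Fin d → ℝ}

theorem Mhat_stationary_block_R (hφ : φ ᵥ* Mhat P_TR P_T P_TD = φ) :
    (fun j => φ (Sum.inl j)) = (fun i => φ (Sum.inr (Sum.inl i))) ᵥ* P_TR :=
  funext fun j => (congrFun hφ _).symm.trans (vecMul_Mhat_inl P_TR P_T P_TD φ j)

theorem Mhat_stationary_block_D (hφ : φ ᵥ* Mhat P_TR P_T P_TD = φ) :
    (fun k => φ (Sum.inr (Sum.inr k))) = (fun i => φ (Sum.inr (Sum.inl i))) ᵥ* P_TD :=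
  funext fun k => (congrFun hφ _).symm.trans (vecMul_Mhat_inr_inr P_TR P_T P_TD φ k)

theorem sum_block_R_add_sum_block_D (hφ1 : ∑ p, φ p = 1) :
    ∑ i, φ (Sum.inl i) + ∑ k, φ (Sum.inr (Sum.inr k)) =
      1 - (fun i => φ (Sum.inr (Sum.inl i))) ⬝ᵥ (fun _ => 1) := by
  rw [Fintype.sum_sum_type, Fintype.sum_sum_type] at hφ1
  simp only [dotProduct, mul_one]
  linarith

theorem Mhat_stationary_block_T (hφ1 : ∑ p, φ p = 1) (hφ : φ ᵥ* Mhat P_TR P_T P_TD = φ) :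
    (fun i => φ (Sum.inr (Sum.inl i))) ᵥ* P_T +
        (1 - (fun i => φ (Sum.inr (Sum.inl i))) ⬝ᵥ (fun _ => 1)) • (n : ℝ)⁻¹ • (fun _ => 1) =
      fun i => φ (Sum.inr (Sum.inl i)) := by
  funext j
  have h := vecMul_Mhat_inr_inl P_TR P_T P_TD φ j
  rw [hφ, sum_block_R_add_sum_block_D hφ1] at h
  simp only [Pi.add_apply, Pi.smul_apply, smul_eq_mul, mul_one, h]

theorem Mhat_stationary_mass_T_ne_zero (hφnn : ∀ p, 0 ≤ φ p) (hφ1 : ∑ p, φ p = 1)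
    (hφ : φ ᵥ* Mhat P_TR P_T P_TD = φ) :
    (fun i => φ (Sum.inr (Sum.inl i))) ⬝ᵥ (fun _ => 1) ≠ 0 := by
  intro h0
  have hT : ∀ i, φ (Sum.inr (Sum.inl i)) = 0 := by
    simpa [dotProduct, Finset.sum_eq_zero_iff_of_nonneg, hφnn] using h0
  have hR : ∀ j, φ (Sum.inl j) = 0 := fun j => by
    simp [congrFun (Mhat_stationary_block_R hφ) j, vecMul, dotProduct, hT]
  have hD : ∀ k, φ (Sum.inr (Sum.inr k)) = 0 := fun k => by
    simp [congrFun (Mhat_stationary_block_D hφ) k, vecMul, dotProduct, hT]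
  have hφ0 : ∀ p, φ p = 0 := by
    rintro (j | j | k)
    exacts [hR j, hT j, hD k]
  simp [hφ0] at hφ1

end Mhat

theorem stmt9_general {r n d : ℕ} (hn : 0 < n)
    (P_TR : Matrix (Fin n) (Fin r) ℝ)
    (P_T : Matrix (Fin n) (Fin n) ℝ)
    (P_TD : Matrix (Fin n) (Fin d) ℝ)
    (hρ : spectralRadius ℝ P_T < 1)
    (e : Fin n → ℝ) (he : e = fun _ => 1)
    (μ : Fin n → ℝ) (hμ : μ = (n : ℝ)⁻¹ • e)
    (lamT : Fin n → ℝ)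
    (hlamT : lamT = ((e ᵥ* (1 - P_T)⁻¹) ⬝ᵥ e)⁻¹ • (e ᵥ* (1 - P_T)⁻¹))
    (θ : ℝ) (hθ : θ = 1 - (lamT ᵥ* P_T) ⬝ᵥ e)
    (Q : Matrix (Fin n) (Fin n) ℝ) (hQ : Q = P_T + vecMulVec (e - P_T *ᵥ e) μ)
    -- φ is ANY stationary probability vector of M_T̂:
    (φ : Fin r ⊕ Fin n ⊕ Fin d → ℝ)
    (hφnn : ∀ p, 0 ≤ φ p) (hφ1 : ∑ p, φ p = 1)
    (hφstat : φ ᵥ* Mhat P_TR P_T P_TD = φ)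
    (φR : Fin r → ℝ) (hφR : φR = fun j => φ (Sum.inl j))
    (φT : Fin n → ℝ) (hφT : φT = fun j => φ (Sum.inr (Sum.inl j)))
    (φD : Fin d → ℝ) (hφD : φD = fun j => φ (Sum.inr (Sum.inr j))) :
    φR = φT ᵥ* P_TR ∧ φD = φT ᵥ* P_TD ∧
      φT ᵥ* Q = φT ∧ φT ⬝ᵥ e = 1 / (1 + θ) := by
  subst he hμ hlamT hθ hQ hφR hφT hφD
  have hee : (fun _ => 1 : Fin n → ℝ) ⬝ᵥ (fun _ => 1) = n := by simp [dotProduct]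
  have hn' : (n : ℝ) ≠ 0 := Nat.cast_ne_zero.mpr hn.ne'
  have hμe : ((n : ℝ)⁻¹ • fun _ => 1 : Fin n → ℝ) ⬝ᵥ (fun _ => 1) = 1 := by
    rw [smul_dotProduct, hee, smul_eq_mul, inv_mul_cancel₀ hn']
  have hT := Mhat_stationary_block_T hφ1 hφstat
  refine ⟨Mhat_stationary_block_R hφstat, Mhat_stationary_block_D hφstat,
    vecMul_add_vecMulVec_eq_self hμe hT, ?_⟩
  rw [← hee] at hT
  exact dotProduct_eq_one_div_one_add_thetaT
    ((isUnit_iff_isUnit_det _).mp (isUnit_one_sub_of_spectralRadius_lt_one hρ))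
    (hee ▸ hn') hT (Mhat_stationary_mass_T_ne_zero hφnn hφ1 hφstat)

theorem stmt9 {r n d : ℕ} (hn : 0 < n)
    (P_TR : Matrix (Fin n) (Fin r) ℝ)
    (P_T : Matrix (Fin n) (Fin n) ℝ)
    (P_TD : Matrix (Fin n) (Fin d) ℝ)
    (hTRnn : ∀ i j, 0 ≤ P_TR i j)
    (hTnn : ∀ i j, 0 ≤ P_T i j)
    (hTDnn : ∀ i j, 0 ≤ P_TD i j)
    (hsub : ∀ i, ∑ j, P_T i j ≤ 1)
    (hρ : spectralRadius ℝ P_T < 1)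
    (hrows : ∀ i, (∑ j, P_TR i j) + (∑ j, P_T i j) + (∑ j, P_TD i j) = 1)
    (e : Fin n → ℝ) (he : e = fun _ => 1)
    (μ : Fin n → ℝ) (hμ : μ = (n : ℝ)⁻¹ • e)
    (lamT : Fin n → ℝ)
    (hlamT : lamT = ((e ᵥ* (1 - P_T)⁻¹) ⬝ᵥ e)⁻¹ • (e ᵥ* (1 - P_T)⁻¹))
    (θ : ℝ) (hθ : θ = 1 - (lamT ᵥ* P_T) ⬝ᵥ e)
    (Q : Matrix (Fin n) (Fin n) ℝ) (hQ : Q = P_T + vecMulVec (e - P_T *ᵥ e) μ)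
    -- φ is ANY stationary probability vector of M_T̂:
    (φ : Fin r ⊕ Fin n ⊕ Fin d → ℝ)
    (hφnn : ∀ p, 0 ≤ φ p) (hφ1 : ∑ p, φ p = 1)
    (hφstat : φ ᵥ* Mhat P_TR P_T P_TD = φ)
    (φR : Fin r → ℝ) (hφR : φR = fun j => φ (Sum.inl j))
    (φT : Fin n → ℝ) (hφT : φT = fun j => φ (Sum.inr (Sum.inl j)))
    (φD : Fin d → ℝ) (hφD : φD = fun j => φ (Sum.inr (Sum.inr j))) :
    φR = φT ᵥ* P_TR ∧ φD = φT ᵥ* P_TD ∧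
      φT ᵥ* Q = φT ∧ φT ⬝ᵥ e = 1 / (1 + θ) :=
  stmt9_general hn P_TR P_T P_TD hρ e he μ hμ lamT hlamT θ hθ Q hQ φ hφnn hφ1 hφstat φR hφR φT hφT
    φD hφD
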